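/- arXiv:2107.06891 — 2 statements merged into one kernel-verified Lean document; each statement's English description precedes it below -/
import Mathlib

section
/- Let h > k > 0 be integers such that the two legs h² - k² and 2hk of the Euclid triple generated by (h, k) differ by exactly 1 (i.e., |(h² - k²) - 2hk| = 1). Then the pair (h', k') = (2h + k, h) has the same property: |(h'² - k'²) - 2h'k'| = 1. -/
/-- If `h > k > 0` and the legs `h² - k²` and `2hk` of the Euclid triple differ by
exactly 1, then the pair `(2h + k, h)` has the same property. -/
theorem stmt_8 (h k : ℤ) (hk : k < h) (hk0 : 0 < k)
    (H : |(h ^ 2 - k ^ 2) - 2 * h * k| = 1) :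
    |((2 * h + k) ^ 2 - h ^ 2) - 2 * (2 * h + k) * h| = 1 := by
  have : ((2 * h + k) ^ 2 - h ^ 2) - 2 * (2 * h + k) * h
      = -((h ^ 2 - k ^ 2) - 2 * h * k) := by ring
  rw [this, abs_neg, H]
end

section
/- If (a, b, c) is a primitive Pythagorean triple with a < b < c, then the difference d = c - b is either the square of an odd integer or twice the square of an integer. -/
/-- In a primitive Pythagorean triple `(a, b, c)` with `a < b < c`, the difference
`d = c - b` is either the square of an odd integer or twice a square. -/
theorem stmt_15 (a b c : ℕ) (ha : 0 < a) (hab : a < b) (hbc : b < c)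
    (h : a ^ 2 + b ^ 2 = c ^ 2) (hprim : Nat.gcd (Nat.gcd a b) c = 1) :
    (∃ n : ℕ, Odd n ∧ c - b = n ^ 2) ∨ (∃ n : ℕ, c - b = 2 * n ^ 2) := by
  -- coprimality of a, b
  have hgab : Nat.gcd a b = 1 := by
    set d := Nat.gcd a b with hd
    have hda : d ∣ a := Nat.gcd_dvd_left a b
    have hdb : d ∣ b := Nat.gcd_dvd_right a b
    have hdc2 : d ^ 2 ∣ c ^ 2 := by
      rw [← h]; exact dvd_add (pow_dvd_pow_of_dvd hda 2) (pow_dvd_pow_of_dvd hdb 2)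
    have hdc : d ∣ c := (Nat.pow_dvd_pow_iff (by norm_num)).mp hdc2
    have : d ∣ 1 := hprim ▸ Nat.dvd_gcd dvd_rfl hdc
    exact Nat.dvd_one.mp this
  have hpt : PythagoreanTriple (a : ℤ) b c := by
    unfold PythagoreanTriple
    have := congrArg (fun x : ℕ => (x : ℤ)) h
    push_cast at this
    nlinarith [this]
  have hco : Int.gcd (a : ℤ) (b : ℤ) = 1 := by
    rw [Int.gcd_natCast_natCast]; exact hgab
  obtain ⟨m, n, h1, h2, _hco, hpar⟩ :=
    PythagoreanTriple.coprime_classification.mp ⟨hpt, hco⟩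
  have hcpos : (0 : ℤ) < c := by exact_mod_cast lt_of_le_of_lt (Nat.zero_le b) hbc
  have hc : (c : ℤ) = m ^ 2 + n ^ 2 := by
    rcases h2 with h2 | h2
    · exact h2
    · exfalso; nlinarith [sq_nonneg m, sq_nonneg n]
  have hcb : (c : ℤ) - b = ((c - b : ℕ) : ℤ) := by
    push_cast [Nat.cast_sub hbc.le]; ring
  rcases h1 with ⟨ha', hb'⟩ | ⟨ha', hb'⟩
  · -- b = 2mn, c - b = (m-n)^2, m-n odd
    left
    refine ⟨(m - n).natAbs, ?_, ?_⟩
    · rw [Int.natAbs_odd, Int.odd_iff]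
      omega
    · have : ((c - b : ℕ) : ℤ) = ((m - n).natAbs ^ 2 : ℕ) := by
        rw [← hcb, hc, hb']
        push_cast [Int.natAbs_sq]
        rw [sq_abs]
        ring
      exact_mod_cast this
  · right
    refine ⟨n.natAbs, ?_⟩
    have : ((c - b : ℕ) : ℤ) = ((2 * n.natAbs ^ 2 : ℕ) : ℤ) := by
      rw [← hcb, hc, hb']
      push_cast [Int.natAbs_sq]
      rw [sq_abs]
      ring
    exact_mod_cast this
end
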